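/- arXiv:1906.05985 — 7 statements merged into one kernel-verified Lean document; each statement's English description precedes it below -/
import Mathlib

section
/- Let n ≥ 1 and let B, L : ℝ → M(n,ℝ) be maps into the n × n real matrices such that B is differentiable and for every t ∈ ℝ one has B'(t) = (1/2)·(L(t)·B(t)ᵀ − B(t)·L(t)ᵀ)·B(t). Then B(t)ᵀ·B(t) = B(0)ᵀ·B(0) for all t ∈ ℝ; in particular, if B(0) is orthogonal (B(0)ᵀ·B(0) = I), then B(t) is orthogonal for all t ∈ ℝ. -/
open Matrix

attribute [local instance] Matrix.frobeniusNormedAddCommGroup Matrix.frobeniusNormedSpace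

attribute [local instance] Matrix.frobeniusNormedRing Matrix.frobeniusNormedAlgebra

theorem HasDerivAt.matrix_transpose {𝕜 : Type*} [NontriviallyNormedField 𝕜] [CompleteSpace 𝕜]
    {m n : Type*} [Fintype m] [Fintype n] {f : 𝕜 → Matrix m n 𝕜} {f' : Matrix m n 𝕜} {x : 𝕜}
    (h : HasDerivAt f f' x) : HasDerivAt (fun y => (f y)ᵀ) f'ᵀ x :=
  ((transposeLinearEquiv m n 𝕜 𝕜).toLinearMap.toContinuousLinearMap :
    Matrix m n 𝕜 →L[𝕜] Matrix n m 𝕜).hasFDerivAt.comp_hasDerivAt x h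

theorem Matrix.transpose_mul_transpose_sub_mul_transpose {α m n : Type*} [CommRing α]
    [Fintype n] (L B : Matrix m n α) :
    (L * Bᵀ - B * Lᵀ)ᵀ = -(L * Bᵀ - B * Lᵀ) := by
  rw [transpose_sub, transpose_mul, transpose_mul, transpose_transpose, transpose_transpose,
    neg_sub]

/-- `(Bᵀ B)' = Bᵀ (Aᵀ + A) B`, which vanishes when `A` is skew-symmetric. -/
theorem transpose_mul_self_eq_of_hasDerivAt_skew {n : Type*} [Fintype n] [DecidableEq n]
    {A B : ℝ → Matrix n n ℝ} (hA : ∀ t, (A t)ᵀ = -A t)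
    (hB : ∀ t, HasDerivAt B (A t * B t) t) (t s : ℝ) :
    (B t)ᵀ * B t = (B s)ᵀ * B s := by
  have hGram : ∀ t, HasDerivAt (fun t => (B t)ᵀ * B t) 0 t := by
    intro t
    have h := (hB t).matrix_transpose.mul (hB t)
    rw [transpose_mul, hA, Matrix.mul_neg, Matrix.neg_mul, Matrix.mul_assoc,
      neg_add_cancel] at h
    exact h
  exact is_const_of_deriv_eq_zero (fun t => (hGram t).differentiableAt)
    (fun t => (hGram t).deriv) t s

theorem stmt0_general (n : ℕ) (B L : ℝ → Matrix (Fin n) (Fin n) ℝ)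
    (hB : ∀ t : ℝ, HasDerivAt B
      ((1 / 2 : ℝ) • ((L t * (B t)ᵀ - B t * (L t)ᵀ) * B t)) t) :
    (∀ t : ℝ, (B t)ᵀ * B t = (B 0)ᵀ * B 0) ∧
      ((B 0)ᵀ * B 0 = 1 → ∀ t : ℝ, (B t)ᵀ * B t = 1) := by
  set A : ℝ → Matrix (Fin n) (Fin n) ℝ := fun t => (1 / 2 : ℝ) • (L t * (B t)ᵀ - B t * (L t)ᵀ)
  have hA : ∀ t, (A t)ᵀ = -A t := fun t => by
    simp only [A, transpose_smul, transpose_mul_transpose_sub_mul_transpose, smul_neg]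
  have hBA : ∀ t, HasDerivAt B (A t * B t) t := fun t => by
    simpa only [A, Matrix.smul_mul] using hB t
  have hGram : ∀ t, (B t)ᵀ * B t = (B 0)ᵀ * B 0 :=
    fun t => transpose_mul_self_eq_of_hasDerivAt_skew hA hBA t 0
  exact ⟨hGram, fun hB₀ t => (hGram t).trans hB₀⟩

/-- The pointwise-in-space core of the `O_n` diffusion equation: if
`B'(t) = (1/2) (L(t) B(t)ᵀ - B(t) L(t)ᵀ) B(t)`, then `B(t)ᵀ B(t)` is constant in time;
in particular orthogonality of `B(0)` is preserved. -/
theorem stmt0 (n : ℕ) (hn : 1 ≤ n) (B L : ℝ → Matrix (Fin n) (Fin n) ℝ)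
    (hB : ∀ t : ℝ, HasDerivAt B
      ((1 / 2 : ℝ) • ((L t * (B t)ᵀ - B t * (L t)ᵀ) * B t)) t) :
    (∀ t : ℝ, (B t)ᵀ * B t = (B 0)ᵀ * B 0) ∧
      ((B 0)ᵀ * B 0 = 1 → ∀ t : ℝ, (B t)ᵀ * B t = 1) :=
  stmt0_general n B L hB
end

section
/- Let η : ℝ × ℝ² → ℝ be differentiable in t for each x and twice continuously differentiable in x for each t, and define B(t,x) = R(η(t,x)), where R(θ) is the 2 × 2 rotation matrix. Then at every point (t,x), B satisfies the O_n diffusion equation ∂_t B(t,x) = (1/2)·(Δ_x B(t,x)·B(t,x)ᵀ − B(t,x)·(Δ_x B(t,x))ᵀ)·B(t,x) if and only if η satisfies the heat equation ∂_t η(t,x) = Δ_x η(t,x) at (t,x). -/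
open Matrix

attribute [local instance] Matrix.frobeniusNormedAddCommGroup Matrix.frobeniusNormedSpace

/-- The entrywise Laplacian `Δu = ∂²u/∂x₁² + ∂²u/∂x₂²` of a function `u : ℝ² → E`. -/
noncomputable def lap {E : Type*} [NormedAddCommGroup E] [NormedSpace ℝ E]
    (u : ℝ × ℝ → E) (x : ℝ × ℝ) : E :=
  deriv (fun s => deriv (fun s' => u (s', x.2)) s) x.1 +
    deriv (fun s => deriv (fun s' => u (x.1, s')) s) x.2

/-- The `2 × 2` rotation matrix of angle `θ`. -/
noncomputable def rot (θ : ℝ) : Matrix (Fin 2) (Fin 2) ℝ :=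
  !![Real.cos θ, -Real.sin θ; Real.sin θ, Real.cos θ]

/-!
Since `R' (θ) = R (θ + π/2)` and `R'' = -R`, the chain rule gives `∂ₜB = ∂ₜη • R (η + π/2)` and
`ΔB = -|∇η|² • R η + Δη • R (η + π/2)`. As `R` is a homomorphism with `R θᵀ = R (-θ)`, the
`|∇η|²` terms cancel in `ΔB Bᵀ - B ΔBᵀ = 2 Δη • R (π/2)`, so the right-hand side of the diffusion
equation is `Δη • R (η + π/2)`. Both sides are multiples of the invertible matrix `R (η + π/2)`.
-/

open Real

section ChainRule

variable {E : Type*} [NormedAddCommGroup E] [NormedSpace ℝ E] {Φ Φ' Φ'' : ℝ → E}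

lemma deriv_deriv_comp (hΦ : ∀ θ, HasDerivAt Φ (Φ' θ) θ) (hΦ' : ∀ θ, HasDerivAt Φ' (Φ'' θ) θ)
    {f : ℝ → ℝ} (hf : ContDiff ℝ 2 f) (p : ℝ) :
    deriv (fun s => deriv (fun s' => Φ (f s')) s) p
      = deriv f p ^ 2 • Φ'' (f p) + deriv (deriv f) p • Φ' (f p) := by
  have hchain : (fun s => deriv (fun s' => Φ (f s')) s) = fun s => deriv f s • Φ' (f s) :=
    funext fun s => ((hΦ (f s)).scomp s (hf.differentiable two_ne_zero s).hasDerivAt).deriv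
  have hprod : HasDerivAt (fun s => deriv f s • Φ' (f s))
      (deriv f p • deriv f p • Φ'' (f p) + deriv (deriv f) p • Φ' (f p)) p :=
    (hf.differentiable_deriv_two p).hasDerivAt.smul
      ((hΦ' (f p)).scomp p (hf.differentiable two_ne_zero p).hasDerivAt)
  rw [hchain, hprod.deriv, smul_smul, sq]

lemma lap_comp (hΦ : ∀ θ, HasDerivAt Φ (Φ' θ) θ) (hΦ' : ∀ θ, HasDerivAt Φ' (Φ'' θ) θ)
    {f : ℝ × ℝ → ℝ} (hf : ContDiff ℝ 2 f) (x : ℝ × ℝ) :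
    lap (fun y => Φ (f y)) x
      = (deriv (fun s => f (s, x.2)) x.1 ^ 2 + deriv (fun s => f (x.1, s)) x.2 ^ 2) • Φ'' (f x)
          + lap f x • Φ' (f x) := by
  have hf₁ : ContDiff ℝ 2 fun s => f (s, x.2) := hf.comp (contDiff_id.prodMk contDiff_const)
  have hf₂ : ContDiff ℝ 2 fun s => f (x.1, s) := hf.comp (contDiff_const.prodMk contDiff_id)
  rw [lap, lap, deriv_deriv_comp hΦ hΦ' hf₁, deriv_deriv_comp hΦ hΦ' hf₂]
  simp only [Prod.mk.eta, add_smul]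
  abel

end ChainRule

lemma rot_zero : rot 0 = 1 := by
  ext i j
  fin_cases i <;> fin_cases j <;> simp [rot]

lemma rot_mul_rot (a b : ℝ) : rot a * rot b = rot (a + b) := by
  ext i j
  fin_cases i <;> fin_cases j <;> simp [rot, cos_add, sin_add] <;> ring

lemma transpose_rot (θ : ℝ) : (rot θ)ᵀ = rot (-θ) := by
  ext i j
  fin_cases i <;> fin_cases j <;> simp [rot]

lemma rot_mul_transpose_rot (a b : ℝ) : rot a * (rot b)ᵀ = rot (a - b) := by
  rw [transpose_rot, rot_mul_rot, sub_eq_add_neg]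

lemma rot_neg_pi_div_two : rot (-(π / 2)) = -rot (π / 2) := by
  ext i j
  fin_cases i <;> fin_cases j <;> simp [rot]

lemma det_rot (θ : ℝ) : (rot θ).det = 1 := by
  simp [rot, det_fin_two, ← sq, cos_sq_add_sin_sq]

lemma rot_ne_zero (θ : ℝ) : rot θ ≠ 0 := by
  intro h
  simpa [det_rot] using congrArg det h

lemma rot_eq_cos_smul_add_sin_smul (θ : ℝ) :
    rot θ = cos θ • 1 + sin θ • !![0, -1; 1, 0] := by
  ext i j
  fin_cases i <;> fin_cases j <;> simp [rot]

lemma hasDerivAt_rot (θ : ℝ) : HasDerivAt rot (rot (θ + π / 2)) θ := by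
  have hderiv : rot (θ + π / 2) = -sin θ • (1 : Matrix (Fin 2) (Fin 2) ℝ)
      + cos θ • !![0, -1; 1, 0] := by
    ext i j
    fin_cases i <;> fin_cases j <;> simp [rot, cos_add_pi_div_two, sin_add_pi_div_two]
  rw [hderiv, show rot = _ from funext rot_eq_cos_smul_add_sin_smul]
  exact ((hasDerivAt_cos θ).smul_const _).add ((hasDerivAt_sin θ).smul_const _)

lemma hasDerivAt_rot_add_pi_div_two (θ : ℝ) :
    HasDerivAt (fun θ => rot (θ + π / 2)) (-rot θ) θ := by
  refine ((hasDerivAt_rot _).comp_add_const θ (π / 2)).congr_deriv ?_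
  rw [add_assoc, add_halves]
  ext i j
  fin_cases i <;> fin_cases j <;> simp [rot]

lemma orthogonal_diffusion_rot (θ g L : ℝ) :
    (1 / 2 : ℝ) • (((g • -rot θ + L • rot (θ + π / 2)) * (rot θ)ᵀ
        - rot θ * (g • -rot θ + L • rot (θ + π / 2))ᵀ) * rot θ)
      = L • rot (θ + π / 2) := by
  have hΔBBt : (g • -rot θ + L • rot (θ + π / 2)) * (rot θ)ᵀ = -g • 1 + L • rot (π / 2) := by
    rw [add_mul, smul_mul_assoc, smul_mul_assoc, neg_mul, rot_mul_transpose_rot,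
      rot_mul_transpose_rot, sub_self, add_sub_cancel_left, rot_zero, smul_neg, neg_smul]
  have hBΔBt : rot θ * (g • -rot θ + L • rot (θ + π / 2))ᵀ = -g • 1 - L • rot (π / 2) := by
    rw [transpose_add, transpose_smul, transpose_smul, transpose_neg, mul_add, mul_smul_comm,
      mul_smul_comm, mul_neg, rot_mul_transpose_rot, rot_mul_transpose_rot, sub_self,
      sub_add_cancel_left, rot_zero, rot_neg_pi_div_two, smul_neg, smul_neg, neg_smul,
      ← sub_eq_add_neg]
  have hskew : -g • (1 : Matrix (Fin 2) (Fin 2) ℝ) + L • rot (π / 2) - (-g • 1 - L • rot (π / 2))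
      = (2 * L) • rot (π / 2) := by
    module
  rw [hΔBBt, hBΔBt, hskew, smul_mul_assoc, rot_mul_rot, smul_smul, add_comm (π / 2)]
  congr 1
  ring

/-- The `SO_2` rotation ansatz `B(t,x) = R(η(t,x))` satisfies the `O_n` diffusion equation
at a point exactly when the phase `η` satisfies the heat equation there. -/
theorem stmt2 (η : ℝ → ℝ × ℝ → ℝ)
    (hηt : ∀ x : ℝ × ℝ, Differentiable ℝ (fun t => η t x))
    (hηx : ∀ t : ℝ, ContDiff ℝ 2 (fun x => η t x))
    (B : ℝ → ℝ × ℝ → Matrix (Fin 2) (Fin 2) ℝ)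
    (hB : ∀ (t : ℝ) (x : ℝ × ℝ), B t x = rot (η t x)) :
    ∀ (t : ℝ) (x : ℝ × ℝ),
      (deriv (fun s => B s x) t =
          (1 / 2 : ℝ) •
            ((lap (fun y => B t y) x * (B t x)ᵀ - B t x * (lap (fun y => B t y) x)ᵀ) * B t x)) ↔
        deriv (fun s => η s x) t = lap (fun y => η t y) x := by
  intro t x
  simp only [hB]
  have htime : deriv (fun s => rot (η s x)) t
      = deriv (fun s => η s x) t • rot (η t x + π / 2) :=
    ((hasDerivAt_rot _).scomp t (hηt x t).hasDerivAt).deriv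
  have hspace := lap_comp hasDerivAt_rot hasDerivAt_rot_add_pi_div_two (hηx t) x
  rw [htime, hspace, orthogonal_diffusion_rot]
  exact (smul_left_injective ℝ (rot_ne_zero _)).eq_iff
end

section
/- Let η : ℝ × ℝ² → ℝ be differentiable in t for each x and twice continuously differentiable in x for each t, and define φ : ℝ × ℝ² → ℂ by φ(t,x) = exp(i·η(t,x)). Then at every point (t,x), φ satisfies the spherical diffusion equation ∂_t φ = Δ_x φ + |∇_x φ|²·φ (where |∇_x φ|² = |∂_{x₁}φ|² + |∂_{x₂}φ|²) if and only if η satisfies the heat equation ∂_t η = Δ_x η at (t,x). -/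
/-- The partial derivative in the first variable of `u : ℝ² → E`. -/
noncomputable def pd1 {E : Type*} [NormedAddCommGroup E] [NormedSpace ℝ E]
    (u : ℝ × ℝ → E) (x : ℝ × ℝ) : E :=
  deriv (fun s => u (s, x.2)) x.1

/-- The partial derivative in the second variable of `u : ℝ² → E`. -/
noncomputable def pd2 {E : Type*} [NormedAddCommGroup E] [NormedSpace ℝ E]
    (u : ℝ × ℝ → E) (x : ℝ × ℝ) : E :=
  deriv (fun s => u (x.1, s)) x.2

open Complex

/-! The chain rule gives `∂(e^{iη}) = i(∂η)e^{iη}` and `∂²(e^{iη}) = (i∂²η - (∂η)²)e^{iη}`;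
since `|e^{iη}| = 1`, the term `|∇φ|²φ = |∇η|²φ` cancels the `-(∇η)²` terms of `Δφ`, leaving
`i(∂_tη - Δη)e^{iη} = 0`, and `e^{iη} ≠ 0`. -/

lemma hasDerivAt_cexp_I_mul_ofReal {f : ℝ → ℝ} {f' s : ℝ} (hf : HasDerivAt f f' s) :
    HasDerivAt (fun s => cexp (I * f s)) (I * f' * cexp (I * f s)) s := by
  convert (hf.ofReal_comp.const_mul I).cexp using 1
  ring

lemma deriv_cexp_I_mul_ofReal {f : ℝ → ℝ} {s : ℝ} (hf : DifferentiableAt ℝ f s) :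
    deriv (fun s => cexp (I * f s)) s = I * deriv f s * cexp (I * f s) :=
  (hasDerivAt_cexp_I_mul_ofReal hf.hasDerivAt).deriv

lemma deriv_deriv_cexp_I_mul_ofReal {f : ℝ → ℝ} (hf : ContDiff ℝ 2 f) (s : ℝ) :
    deriv (deriv fun s => cexp (I * f s)) s =
      (I * deriv (deriv f) s - (deriv f s ^ 2 : ℝ)) * cexp (I * f s) := by
  have hf1 : Differentiable ℝ f := hf.differentiable two_ne_zero
  have hderiv : deriv (fun s => cexp (I * f s)) = fun s => I * deriv f s * cexp (I * f s) :=
    funext fun s => deriv_cexp_I_mul_ofReal (hf1 s)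
  rw [hderiv]
  refine (((hf.differentiable_deriv_two s).hasDerivAt.ofReal_comp.const_mul I).mul
    (hasDerivAt_cexp_I_mul_ofReal (hf1 s).hasDerivAt)).deriv.trans ?_
  push_cast
  linear_combination ((deriv f s : ℝ) : ℂ) ^ 2 * cexp (I * f s) * I_sq

lemma norm_I_mul_ofReal_mul_cexp (a b : ℝ) : ‖I * a * cexp (I * b)‖ = |a| := by
  simp [norm_exp]

section Plane

variable {u : ℝ × ℝ → ℝ}

lemma pd1_cexp_I_mul_ofReal (hu : Differentiable ℝ u) (x : ℝ × ℝ) :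
    pd1 (fun y => cexp (I * u y)) x = I * pd1 u x * cexp (I * u x) :=
  deriv_cexp_I_mul_ofReal ((hu.comp (differentiable_id.prodMk (differentiable_const _))) _)

lemma pd2_cexp_I_mul_ofReal (hu : Differentiable ℝ u) (x : ℝ × ℝ) :
    pd2 (fun y => cexp (I * u y)) x = I * pd2 u x * cexp (I * u x) :=
  deriv_cexp_I_mul_ofReal ((hu.comp ((differentiable_const _).prodMk differentiable_id)) _)

lemma norm_pd1_cexp_I_mul_ofReal_sq (hu : Differentiable ℝ u) (x : ℝ × ℝ) :
    ‖pd1 (fun y => cexp (I * u y)) x‖ ^ 2 = pd1 u x ^ 2 := by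
  rw [pd1_cexp_I_mul_ofReal hu, norm_I_mul_ofReal_mul_cexp, sq_abs]

lemma norm_pd2_cexp_I_mul_ofReal_sq (hu : Differentiable ℝ u) (x : ℝ × ℝ) :
    ‖pd2 (fun y => cexp (I * u y)) x‖ ^ 2 = pd2 u x ^ 2 := by
  rw [pd2_cexp_I_mul_ofReal hu, norm_I_mul_ofReal_mul_cexp, sq_abs]

lemma lap_cexp_I_mul_ofReal (hu : ContDiff ℝ 2 u) (x : ℝ × ℝ) :
    lap (fun y => cexp (I * u y)) x =
      (I * lap u x - (pd1 u x ^ 2 + pd2 u x ^ 2 : ℝ)) * cexp (I * u x) := by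
  have h1 := deriv_deriv_cexp_I_mul_ofReal
    (hu.comp (contDiff_id.prodMk (contDiff_const (c := x.2)))) x.1
  have h2 := deriv_deriv_cexp_I_mul_ofReal
    (hu.comp ((contDiff_const (c := x.1)).prodMk contDiff_id)) x.2
  simp only [Function.comp_def, id] at h1 h2
  unfold lap pd1 pd2
  rw [h1, h2]
  push_cast
  ring

end Plane

/-- The ansatz `φ = e^{iη}` satisfies the spherical diffusion equation
`∂_t φ = Δφ + |∇φ|² φ` at a point exactly when the phase `η` satisfies the heat
equation there. -/
theorem stmt3 (η : ℝ → ℝ × ℝ → ℝ)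
    (hηt : ∀ x : ℝ × ℝ, Differentiable ℝ (fun t => η t x))
    (hηx : ∀ t : ℝ, ContDiff ℝ 2 (fun x => η t x))
    (φ : ℝ → ℝ × ℝ → ℂ)
    (hφ : ∀ (t : ℝ) (x : ℝ × ℝ), φ t x = Complex.exp (Complex.I * (η t x : ℂ))) :
    ∀ (t : ℝ) (x : ℝ × ℝ),
      (deriv (fun s => φ s x) t =
          lap (fun y => φ t y) x +
            ((‖pd1 (fun y => φ t y) x‖ ^ 2 + ‖pd2 (fun y => φ t y) x‖ ^ 2 : ℝ) : ℂ) * φ t x) ↔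
        deriv (fun s => η s x) t = lap (fun y => η t y) x := by
  intro t x
  have hφt : (fun y => φ t y) = fun y => cexp (I * η t y) := funext (hφ t)
  have hφx : (fun s => φ s x) = fun s => cexp (I * η s x) := funext fun s => hφ s x
  have hη : ContDiff ℝ 2 (fun y => η t y) := hηx t
  rw [hφx, hφt, hφ t x, deriv_cexp_I_mul_ofReal (hηt x t), lap_cexp_I_mul_ofReal hη,
    norm_pd1_cexp_I_mul_ofReal_sq (hη.differentiable two_ne_zero),
    norm_pd2_cexp_I_mul_ofReal_sq (hη.differentiable two_ne_zero), sub_mul, sub_add_cancel,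
    mul_left_inj' (exp_ne_zero _), mul_right_inj' I_ne_zero, ofReal_inj]
end

section
/- Let n ≥ 1 and let B₀ ∈ M(n,ℝ) be invertible with singular value decomposition B₀ = U·Σ₀·Vᵀ, where U and V are orthogonal and Σ₀ is diagonal with strictly positive diagonal entries. Suppose B : [0,∞) → M(n,ℝ) is differentiable with B(0) = B₀ and B'(t) = B(t)·(I − B(t)ᵀ·B(t)) for all t ≥ 0 (the reaction ODE arising from the matrix Allen–Cahn equation ∂_t A = ΔA − ε⁻²A(AᵀA − I) at a single spatial point). Then B(t) converges to U·Vᵀ as t → ∞; U·Vᵀ is the orthogonal matrix closest to B₀ in Frobenius norm. -/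
/-!
If `X = U diag(σ) Vᵀ` with `U`, `V` orthogonal, then `X (1 - XᵀX) = U diag(σ - σ³) Vᵀ`: the
flow keeps the singular vectors and moves each singular value along `σ' = σ - σ³`. Solving this
scalar equation explicitly gives a solution `U diag(σ(t)) Vᵀ`, which is the solution by
uniqueness for the locally Lipschitz vector field, and it tends to `U Vᵀ` since `σᵢ(t) → 1`
whenever `σᵢ(0) > 0`.

For orthogonal `Q`, `‖B₀ - Q‖² = ‖B₀‖² - 2 tr(Σ₀ W) + n` with `W = Uᵀ Q V` orthogonal. The
diagonal entries of `W` are at most `1`, so `tr(Σ₀ W) ≤ tr Σ₀`, with equality at `W = 1`, that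
is at `Q = U Vᵀ`.
-/

open Matrix Filter Set

attribute [local instance] Matrix.frobeniusNormedAddCommGroup Matrix.frobeniusNormedSpace

section
open Real

/- The substitution `u = σ⁻²` turns `σ' = σ - σ³` into the linear equation `u' = 2 - 2u`. -/
noncomputable def cubicFlow (s t : ℝ) : ℝ := s / √(s ^ 2 + (1 - s ^ 2) * exp (-2 * t))

theorem cubicFlow_zero (s : ℝ) : cubicFlow s 0 = s := by
  simp [cubicFlow]

theorem hasDerivAt_cubicFlow (s : ℝ) {t : ℝ} (ht : 0 ≤ t) :
    HasDerivAt (cubicFlow s) (cubicFlow s t - cubicFlow s t ^ 3) t := by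
  have hexp_le : exp (-2 * t) ≤ 1 := exp_le_one_iff.2 (by linarith)
  have hD : 0 < s ^ 2 + (1 - s ^ 2) * exp (-2 * t) := by
    nlinarith [mul_nonneg (sq_nonneg s) (sub_nonneg.2 hexp_le), exp_pos (-2 * t)]
  have hD' := (((hasDerivAt_id t).const_mul (-2)).exp.const_mul (1 - s ^ 2)).const_add (s ^ 2)
  have hflow := (hasDerivAt_const t s).div (hD'.sqrt hD.ne') (sqrt_pos.2 hD).ne'
  have hquot : ∀ r e : ℝ, 0 < r → r ^ 2 = s ^ 2 + (1 - s ^ 2) * e →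
      s / r - (s / r) ^ 3 = (0 * r - s * ((1 - s ^ 2) * (e * (-2 * 1)) / (2 * r))) / r ^ 2 := by
    intro r e hr hre
    field_simp
    linear_combination s * hre
  exact hflow.congr_deriv (hquot _ _ (sqrt_pos.2 hD) (sq_sqrt hD.le)).symm

theorem tendsto_cubicFlow {s : ℝ} (hs : 0 < s) : Tendsto (cubicFlow s) atTop (nhds 1) := by
  have hexp : Tendsto (fun t : ℝ ↦ exp (-2 * t)) atTop (nhds 0) :=
    tendsto_exp_atBot.comp (tendsto_id.const_mul_atTop_of_neg (by norm_num))
  have hsqrt : Tendsto (fun t ↦ √(s ^ 2 + (1 - s ^ 2) * exp (-2 * t))) atTop (nhds s) := by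
    have := ((hexp.const_mul (1 - s ^ 2)).const_add (s ^ 2)).sqrt
    rwa [mul_zero, add_zero, sqrt_sq hs.le] at this
  have := (tendsto_const_nhds (x := s)).div hsqrt hs.ne'
  rwa [div_self hs.ne'] at this

end

theorem ODE_solution_unique_Ici_of_contDiff {E : Type*} [NormedAddCommGroup E] [NormedSpace ℝ E]
    [FiniteDimensional ℝ E] {v : E → E} (hv : ContDiff ℝ 1 v) {f g : ℝ → E} {a : ℝ}
    (hf : ∀ t ∈ Ici a, HasDerivWithinAt f (v (f t)) (Ici a) t)
    (hg : ∀ t ∈ Ici a, HasDerivWithinAt g (v (g t)) (Ici a) t) (ha : f a = g a) :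
    EqOn f g (Ici a) := by
  intro T hT
  have hfc : ContinuousOn f (Icc a T) :=
    fun t ht ↦ (hf t ht.1).continuousWithinAt.mono Icc_subset_Ici_self
  have hgc : ContinuousOn g (Icc a T) :=
    fun t ht ↦ (hg t ht.1).continuousWithinAt.mono Icc_subset_Ici_self
  obtain ⟨R, hR⟩ := ((isCompact_Icc.image_of_continuousOn hfc).union
    (isCompact_Icc.image_of_continuousOn hgc)).isBounded.subset_closedBall 0
  obtain ⟨K, hK⟩ := hv.contDiffOn.exists_lipschitzOnWith one_ne_zero (convex_closedBall 0 R)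
    (isCompact_closedBall 0 R)
  exact ODE_solution_unique_of_mem_Icc_right (fun _ _ ↦ hK) hfc
    (fun t ht ↦ (hf t ht.1).mono (Ici_subset_Ici.2 ht.1))
    (fun t ht ↦ hR (Or.inl (mem_image_of_mem f (Ico_subset_Icc_self ht))))
    hgc (fun t ht ↦ (hg t ht.1).mono (Ici_subset_Ici.2 ht.1))
    (fun t ht ↦ hR (Or.inr (mem_image_of_mem g (Ico_subset_Icc_self ht)))) ha ⟨hT, le_rfl⟩

section
attribute [local instance] Matrix.frobeniusNormedRing Matrix.frobeniusNormedAlgebra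
variable {ι : Type*} [Fintype ι] [DecidableEq ι]

theorem mul_one_sub_transpose_mul_self_svd {R : Type*} [CommRing R] {U V : Matrix ι ι R}
    (hU : Uᵀ * U = 1) (hV : Vᵀ * V = 1) (σ : ι → R) :
    U * diagonal σ * Vᵀ * (1 - (U * diagonal σ * Vᵀ)ᵀ * (U * diagonal σ * Vᵀ)) =
      U * diagonal (fun i ↦ σ i - σ i ^ 3) * Vᵀ := by
  have hcube : diagonal σ * (Vᵀ * V) * (diagonal σ * (Uᵀ * U) * diagonal σ) =
      diagonal fun i ↦ σ i ^ 3 := by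
    simp only [hU, hV, Matrix.mul_one, diagonal_mul_diagonal]
    exact congrArg diagonal (funext fun i ↦ by ring)
  have hsub : diagonal (fun i ↦ σ i - σ i ^ 3) = diagonal σ - diagonal fun i ↦ σ i ^ 3 := by
    rw [← diagonal_sub]
  rw [hsub, ← hcube]
  simp only [transpose_mul, transpose_transpose, diagonal_transpose, Matrix.mul_sub,
    Matrix.sub_mul, Matrix.mul_one, Matrix.mul_assoc]

noncomputable def svdFlow (U V : Matrix ι ι ℝ) (d : ι → ℝ) (t : ℝ) : Matrix ι ι ℝ :=
  U * diagonal (fun i ↦ cubicFlow (d i) t) * Vᵀ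

theorem svdFlow_zero (U V : Matrix ι ι ℝ) (d : ι → ℝ) :
    svdFlow U V d 0 = U * diagonal d * Vᵀ := by
  simp only [svdFlow, cubicFlow_zero]

theorem hasDerivAt_svdFlow {U V : Matrix ι ι ℝ} (hU : Uᵀ * U = 1) (hV : Vᵀ * V = 1)
    (d : ι → ℝ) {t : ℝ} (ht : 0 ≤ t) :
    HasDerivAt (svdFlow U V d)
      (svdFlow U V d t * (1 - (svdFlow U V d t)ᵀ * svdFlow U V d t)) t := by
  have hσ : HasDerivAt (fun u i ↦ cubicFlow (d i) u)
      (fun i ↦ cubicFlow (d i) t - cubicFlow (d i) t ^ 3) t :=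
    hasDerivAt_pi.2 fun i ↦ hasDerivAt_cubicFlow (d i) ht
  have hdiag :=
    (diagonalLinearMap ι ℝ ℝ).toContinuousLinearMap.hasFDerivAt.comp_hasDerivAt t hσ
  rw [svdFlow, mul_one_sub_transpose_mul_self_svd hU hV]
  exact (hdiag.const_mul U).mul_const Vᵀ

theorem tendsto_svdFlow (U V : Matrix ι ι ℝ) {d : ι → ℝ} (hd : ∀ i, 0 < d i) :
    Tendsto (svdFlow U V d) atTop (nhds (U * Vᵀ)) := by
  have hσ : Tendsto (fun t i ↦ cubicFlow (d i) t) atTop (nhds 1) :=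
    tendsto_pi_nhds.2 fun i ↦ tendsto_cubicFlow (hd i)
  have hcont : Continuous fun σ : ι → ℝ ↦ U * diagonal σ * Vᵀ :=
    (continuous_const.matrix_mul continuous_id.matrix_diagonal).matrix_mul continuous_const
  have h := (hcont.tendsto 1).comp hσ
  rwa [Pi.one_def, diagonal_one, Matrix.mul_one] at h

theorem contDiff_mul_one_sub_transpose_mul_self :
    ContDiff ℝ 1 fun X : Matrix ι ι ℝ ↦ X * (1 - Xᵀ * X) := by
  have htr : ContDiff ℝ 1 fun X : Matrix ι ι ℝ ↦ Xᵀ :=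
    (transposeLinearEquiv ι ι ℝ ℝ).toLinearMap.toContinuousLinearMap.contDiff
  exact contDiff_id.mul (contDiff_const.sub (htr.mul contDiff_id))

end

section
variable {m n : Type*} [Fintype m]

theorem frobenius_norm_sq_eq_trace [Fintype n] (A : Matrix m n ℝ) :
    ‖A‖ ^ 2 = trace (Aᵀ * A) := by
  rw [frobenius_norm_def, ← Real.rpow_natCast, ← Real.rpow_mul (by positivity)]
  simp [trace, Matrix.mul_apply, sq, Finset.sum_comm (γ := m)]

theorem frobenius_norm_sub_sq [Fintype n] [DecidableEq n] {Q : Matrix m n ℝ} (hQ : Qᵀ * Q = 1)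
    (A : Matrix m n ℝ) :
    ‖A - Q‖ ^ 2 = ‖A‖ ^ 2 - 2 * trace (Aᵀ * Q) + Fintype.card n := by
  have hsymm : trace (Qᵀ * A) = trace (Aᵀ * Q) := by
    rw [← trace_transpose, transpose_mul, transpose_transpose]
  simp only [frobenius_norm_sq_eq_trace, transpose_sub, Matrix.sub_mul, Matrix.mul_sub,
    trace_sub, hQ, trace_one, hsymm]
  ring

theorem le_one_of_transpose_mul_self_eq_one [DecidableEq n] {Q : Matrix m n ℝ}
    (hQ : Qᵀ * Q = 1) (i : m) (j : n) : Q i j ≤ 1 := by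
  have hcol : ∑ k, Q k j ^ 2 = 1 := by
    simpa [Matrix.mul_apply, sq] using congrFun (congrFun hQ j) j
  have hsq : Q i j ^ 2 ≤ 1 :=
    hcol ▸ Finset.single_le_sum (fun k _ ↦ sq_nonneg (Q k j)) (Finset.mem_univ i)
  exact ((sq_le_one_iff_abs_le_one _).1 hsq |>.trans' (le_abs_self _))

variable {ι : Type*} [Fintype ι] [DecidableEq ι]

theorem trace_diagonal_mul_le {d : ι → ℝ} (hd : ∀ i, 0 ≤ d i) {W : Matrix ι ι ℝ}
    (hW : Wᵀ * W = 1) : trace (diagonal d * W) ≤ ∑ i, d i := by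
  simp only [trace, diag, diagonal_mul]
  exact Finset.sum_le_sum fun i _ ↦
    mul_le_of_le_one_right (hd i) (le_one_of_transpose_mul_self_eq_one hW i i)

theorem trace_svd_transpose_mul (U V Q : Matrix ι ι ℝ) (d : ι → ℝ) :
    trace ((U * diagonal d * Vᵀ)ᵀ * Q) = trace (diagonal d * (Uᵀ * Q * V)) := by
  simp only [transpose_mul, transpose_transpose, diagonal_transpose, Matrix.mul_assoc]
  rw [trace_mul_comm]
  simp only [Matrix.mul_assoc]

theorem frobenius_norm_svd_sub_polar_le {U V : Matrix ι ι ℝ} (hU : Uᵀ * U = 1)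
    (hV : Vᵀ * V = 1) {d : ι → ℝ} (hd : ∀ i, 0 ≤ d i) {Q : Matrix ι ι ℝ} (hQ : Qᵀ * Q = 1) :
    ‖U * diagonal d * Vᵀ - U * Vᵀ‖ ≤ ‖U * diagonal d * Vᵀ - Q‖ := by
  have hUUt : U * Uᵀ = 1 := mul_eq_one_comm.1 hU
  have hVVt : V * Vᵀ = 1 := mul_eq_one_comm.1 hV
  have hpolar : (U * Vᵀ)ᵀ * (U * Vᵀ) = 1 := by
    rw [transpose_mul, transpose_transpose, Matrix.mul_assoc, ← Matrix.mul_assoc Uᵀ, hU,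
      Matrix.one_mul, hVVt]
  have hW : (Uᵀ * Q * V)ᵀ * (Uᵀ * Q * V) = 1 := by
    simp only [transpose_mul, transpose_transpose, Matrix.mul_assoc]
    rw [← Matrix.mul_assoc U, hUUt, Matrix.one_mul, ← Matrix.mul_assoc Qᵀ, hQ, Matrix.one_mul,
      hV]
  have hpolarW : Uᵀ * (U * Vᵀ) * V = 1 := by
    rw [← Matrix.mul_assoc, hU, Matrix.one_mul, hV]
  rw [← pow_le_pow_iff_left₀ (norm_nonneg _) (norm_nonneg _) two_ne_zero,
    frobenius_norm_sub_sq hpolar, frobenius_norm_sub_sq hQ, trace_svd_transpose_mul,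
    trace_svd_transpose_mul, hpolarW, Matrix.mul_one, trace_diagonal]
  linarith [trace_diagonal_mul_le hd hW]

end

theorem stmt5_general (n : ℕ) (B₀ U V S₀ : Matrix (Fin n) (Fin n) ℝ)
    (hU : Uᵀ * U = 1) (hV : Vᵀ * V = 1)
    (hSdiag : ∀ i j : Fin n, i ≠ j → S₀ i j = 0)
    (hSpos : ∀ i : Fin n, 0 < S₀ i i)
    (hSVD : B₀ = U * S₀ * Vᵀ)
    (B : ℝ → Matrix (Fin n) (Fin n) ℝ) (hB0 : B 0 = B₀)
    (hB : ∀ t : ℝ, 0 ≤ t →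
      HasDerivWithinAt B (B t * (1 - (B t)ᵀ * B t)) (Set.Ici 0) t) :
    Tendsto B atTop (nhds (U * Vᵀ)) ∧
      ∀ Q : Matrix (Fin n) (Fin n) ℝ, Qᵀ * Q = 1 → ‖B₀ - U * Vᵀ‖ ≤ ‖B₀ - Q‖ := by
  have hS : diagonal S₀.diag = S₀ := (isDiag_iff_diagonal_diag S₀).1 fun i j ↦ hSdiag i j
  rw [← hS] at hSVD
  subst hSVD
  refine ⟨?_, fun Q hQ ↦ frobenius_norm_svd_sub_polar_le hU hV (fun i ↦ (hSpos i).le) hQ⟩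
  have hflow : EqOn B (svdFlow U V S₀.diag) (Ici 0) :=
    ODE_solution_unique_Ici_of_contDiff contDiff_mul_one_sub_transpose_mul_self hB
      (fun t ht ↦ (hasDerivAt_svdFlow hU hV _ ht).hasDerivWithinAt)
      (by rw [hB0, svdFlow_zero])
  exact (tendsto_svdFlow U V hSpos).congr' (eventuallyEq_of_mem (Ici_mem_atTop 0) hflow).symm

/-- Lemma 2.1: the solution of the matrix reaction ODE `B' = B(I - BᵀB)` with invertible
initial condition `B₀ = U S₀ Vᵀ` converges to `U Vᵀ`, the orthogonal matrix closest to `B₀`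
in the Frobenius norm. -/
theorem stmt5 (n : ℕ) (hn : 1 ≤ n) (B₀ U V S₀ : Matrix (Fin n) (Fin n) ℝ)
    (hB₀ : IsUnit B₀)
    (hU : Uᵀ * U = 1) (hV : Vᵀ * V = 1)
    (hSdiag : ∀ i j : Fin n, i ≠ j → S₀ i j = 0)
    (hSpos : ∀ i : Fin n, 0 < S₀ i i)
    (hSVD : B₀ = U * S₀ * Vᵀ)
    (B : ℝ → Matrix (Fin n) (Fin n) ℝ) (hB0 : B 0 = B₀)
    (hB : ∀ t : ℝ, 0 ≤ t →
      HasDerivWithinAt B (B t * (1 - (B t)ᵀ * B t)) (Set.Ici 0) t) :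
    Tendsto B atTop (nhds (U * Vᵀ)) ∧
      ∀ Q : Matrix (Fin n) (Fin n) ℝ, Qᵀ * Q = 1 → ‖B₀ - U * Vᵀ‖ ≤ ‖B₀ - Q‖ :=
  stmt5_general n B₀ U V S₀ hU hV hSdiag hSpos hSVD B hB0 hB
end

section
/- Let n ≥ 1, let U, V ∈ M(n,ℝ) be orthogonal matrices, and let σ₁,…,σₙ : [0,∞) → ℝ be differentiable functions satisfying σᵢ'(t) = σᵢ(t) − σᵢ(t)³ for all t ≥ 0 and each i. Define B(t) = U·diag(σ₁(t),…,σₙ(t))·Vᵀ. Then B is differentiable and B'(t) = B(t)·(I − B(t)ᵀ·B(t)) for all t ≥ 0. -/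
open Matrix

attribute [local instance] Matrix.frobeniusNormedAddCommGroup Matrix.frobeniusNormedSpace

section

variable {l m ι : Type*} [Fintype l] [Fintype m] [Fintype ι]

theorem Matrix.hasDerivWithinAt_mul_diagonal_mul [DecidableEq ι]
    (U : Matrix l ι ℝ) (V : Matrix ι m ℝ)
    {f : ℝ → ι → ℝ} {f' : ι → ℝ} {s : Set ℝ} {t : ℝ} (hf : HasDerivWithinAt f f' s t) :
    HasDerivWithinAt (fun t => U * diagonal (f t) * V) (U * diagonal f' * V) s t :=
  let L := mulRightLinearMap l ℝ V ∘ₗ mulLeftLinearMap ι ℝ U ∘ₗ diagonalLinearMap ι ℝ ℝ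
  L.toContinuousLinearMap.hasFDerivAt.comp_hasDerivWithinAt t hf

theorem Matrix.mul_transpose_mul_of_orthogonal [DecidableEq l] [DecidableEq m]
    {R : Type*} [CommRing R]
    {U : Matrix l l R} {V : Matrix m m R} (hU : Uᵀ * U = 1) (hV : Vᵀ * V = 1)
    (D : Matrix l m R) :
    U * D * Vᵀ * ((U * D * Vᵀ)ᵀ * (U * D * Vᵀ)) = U * (D * (Dᵀ * D)) * Vᵀ := by
  calc U * D * Vᵀ * ((U * D * Vᵀ)ᵀ * (U * D * Vᵀ))
      = U * (D * ((Vᵀ * V) * (Dᵀ * ((Uᵀ * U) * (D * Vᵀ))))) := by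
        simp only [transpose_mul, transpose_transpose, Matrix.mul_assoc]
    _ = U * (D * (Dᵀ * D)) * Vᵀ := by
        simp only [hU, hV, Matrix.one_mul, Matrix.mul_assoc]

end

theorem stmt7_general (n : ℕ) (U V : Matrix (Fin n) (Fin n) ℝ)
    (hU : Uᵀ * U = 1) (hV : Vᵀ * V = 1)
    (σ : Fin n → ℝ → ℝ)
    (hσ : ∀ (i : Fin n) (t : ℝ), 0 ≤ t →
      HasDerivWithinAt (σ i) (σ i t - σ i t ^ 3) (Set.Ici 0) t)
    (B : ℝ → Matrix (Fin n) (Fin n) ℝ)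
    (hB : ∀ t : ℝ, B t = U * Matrix.diagonal (fun i => σ i t) * Vᵀ) :
    ∀ t : ℝ, 0 ≤ t → HasDerivWithinAt B (B t * (1 - (B t)ᵀ * B t)) (Set.Ici 0) t := by
  intro t ht
  have hdiag : B t * (1 - (B t)ᵀ * B t)
      = U * diagonal (fun i => σ i t - σ i t ^ 3) * Vᵀ := by
    rw [Matrix.mul_sub, Matrix.mul_one, hB, mul_transpose_mul_of_orthogonal hU hV,
      diagonal_transpose, diagonal_mul_diagonal, diagonal_mul_diagonal, ← Matrix.sub_mul,
      ← Matrix.mul_sub, ← diagonal_sub]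
    simp only [pow_three]
  rw [hdiag, funext hB]
  exact hasDerivWithinAt_mul_diagonal_mul U Vᵀ (hasDerivWithinAt_pi.mpr fun i => hσ i t ht)

/-- The matrix reaction ODE `B' = B(I - BᵀB)` preserves the singular vectors: if each
singular value satisfies `σᵢ' = σᵢ - σᵢ³`, then `B(t) = U diag(σ(t)) Vᵀ` solves the
matrix ODE. -/
theorem stmt7 (n : ℕ) (hn : 1 ≤ n) (U V : Matrix (Fin n) (Fin n) ℝ)
    (hU : Uᵀ * U = 1) (hV : Vᵀ * V = 1)
    (σ : Fin n → ℝ → ℝ)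
    (hσ : ∀ (i : Fin n) (t : ℝ), 0 ≤ t →
      HasDerivWithinAt (σ i) (σ i t - σ i t ^ 3) (Set.Ici 0) t)
    (B : ℝ → Matrix (Fin n) (Fin n) ℝ)
    (hB : ∀ t : ℝ, B t = U * Matrix.diagonal (fun i => σ i t) * Vᵀ) :
    ∀ t : ℝ, 0 ≤ t → HasDerivWithinAt B (B t * (1 - (B t)ᵀ * B t)) (Set.Ici 0) t :=
  stmt7_general n U V hU hV σ hσ B hB
end

section
/- Let n ≥ 1, let U₁, U₂ ∈ M(n,ℝ) be orthogonal matrices, and let d₁,…,dₙ : ℝ → ℝ be twice differentiable functions with dᵢ''(z) = dᵢ(z)³ − dᵢ(z) for all z ∈ ℝ and each i. Define B(z) = U₁·diag(d₁(z),…,dₙ(z))·U₂ᵀ. Then B is twice differentiable and B''(z) = B(z)·(B(z)ᵀ·B(z) − I) for all z ∈ ℝ. -/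
/-! Orthogonality of `U₁` and `U₂` gives `BᵀB = U₂ D² U₂ᵀ` for `B = U₁ D U₂ᵀ` with `D` diagonal,
so `B (BᵀB - I) = U₁ (D³ - D) U₂ᵀ`; differentiating `B` twice entrywise along the diagonal gives
the same matrix by the scalar equations `dᵢ'' = dᵢ³ - dᵢ`. -/

open Matrix

attribute [local instance] Matrix.frobeniusNormedAddCommGroup Matrix.frobeniusNormedSpace
-- `HasDerivAt` only sees the product topology on matrices; the Frobenius normed algebra
-- structure is there to make the product rule for normed algebras available.
attribute [local instance] Matrix.frobeniusNormedRing Matrix.frobeniusNormedAlgebra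

section Calculus

variable {𝕜 : Type*} [RCLike 𝕜] {ι : Type*} [Fintype ι] [DecidableEq ι]
  {f : ι → 𝕜 → 𝕜} {f' : ι → 𝕜} {z : 𝕜}

theorem hasDerivAt_diagonal (h : ∀ i, HasDerivAt (f i) (f' i) z) :
    HasDerivAt (fun z => diagonal fun i => f i z) (diagonal f') z := by
  have := HasDerivAt.fun_sum (u := Finset.univ) fun i _ => (h i).smul_const (single i i (1 : 𝕜))
  simp only [smul_single, smul_eq_mul, mul_one, sum_single_eq_diagonal] at this
  exact this

theorem hasDerivAt_mul_diagonal_mul (A C : Matrix ι ι 𝕜) (h : ∀ i, HasDerivAt (f i) (f' i) z) :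
    HasDerivAt (fun z => A * diagonal (fun i => f i z) * C) (A * diagonal f' * C) z :=
  ((hasDerivAt_diagonal h).const_mul A).mul_const C

end Calculus

section Algebra

variable {ι R : Type*} [Fintype ι] [DecidableEq ι] [CommRing R]

theorem Matrix.orthogonal_conj_mul_transpose_mul_sub_one {U₁ U₂ : Matrix ι ι R}
    (hU₁ : U₁ᵀ * U₁ = 1) (hU₂ : U₂ᵀ * U₂ = 1) (D : Matrix ι ι R) :
    U₁ * D * U₂ᵀ * ((U₁ * D * U₂ᵀ)ᵀ * (U₁ * D * U₂ᵀ) - 1) = U₁ * (D * Dᵀ * D - D) * U₂ᵀ := by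
  have cancel {U : Matrix ι ι R} (hU : Uᵀ * U = 1) (X : Matrix ι ι R) : Uᵀ * (U * X) = X := by
    rw [← Matrix.mul_assoc, hU, Matrix.one_mul]
  simp only [transpose_mul, transpose_transpose, Matrix.mul_sub, Matrix.sub_mul, Matrix.mul_one,
    Matrix.mul_assoc, cancel hU₁, cancel hU₂]

theorem Matrix.diagonal_mul_transpose_mul_sub (v : ι → R) :
    diagonal v * (diagonal v)ᵀ * diagonal v - diagonal v = diagonal fun i => v i ^ 3 - v i := by
  simp [diagonal_mul_diagonal, diagonal_sub, pow_succ]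

end Algebra

theorem stmt12_general (n : ℕ) (U₁ U₂ : Matrix (Fin n) (Fin n) ℝ)
    (hU₁ : U₁ᵀ * U₁ = 1) (hU₂ : U₂ᵀ * U₂ = 1)
    (d : Fin n → ℝ → ℝ)
    (hd : ∀ (i : Fin n) (z : ℝ), HasDerivAt (d i) (deriv (d i) z) z)
    (hd' : ∀ (i : Fin n) (z : ℝ), HasDerivAt (deriv (d i)) (d i z ^ 3 - d i z) z)
    (B : ℝ → Matrix (Fin n) (Fin n) ℝ)
    (hB : ∀ z : ℝ, B z = U₁ * Matrix.diagonal (fun i => d i z) * U₂ᵀ) :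
    (∀ z : ℝ, HasDerivAt B (deriv B z) z) ∧
      ∀ z : ℝ, HasDerivAt (deriv B) (B z * ((B z)ᵀ * B z - 1)) z := by
  have hB' (z : ℝ) : HasDerivAt B (U₁ * diagonal (fun i => deriv (d i) z) * U₂ᵀ) z := by
    rw [show B = _ from funext hB]
    exact hasDerivAt_mul_diagonal_mul U₁ U₂ᵀ fun i => hd i z
  have hderivB : deriv B = fun z => U₁ * diagonal (fun i => deriv (d i) z) * U₂ᵀ :=
    funext fun z => (hB' z).deriv
  refine ⟨fun z => (hB' z).differentiableAt.hasDerivAt, fun z => ?_⟩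
  rw [hderivB, hB, orthogonal_conj_mul_transpose_mul_sub_one hU₁ hU₂,
    diagonal_mul_transpose_mul_sub]
  exact hasDerivAt_mul_diagonal_mul U₁ U₂ᵀ fun i => hd' i z

/-- Conjugating a diagonal solution of the componentwise stationary Allen--Cahn ODE
`d'' = d³ - d` by fixed orthogonal matrices yields a solution of the matrix equation
`B'' = B(BᵀB - I)`. -/
theorem stmt12 (n : ℕ) (hn : 1 ≤ n) (U₁ U₂ : Matrix (Fin n) (Fin n) ℝ)
    (hU₁ : U₁ᵀ * U₁ = 1) (hU₂ : U₂ᵀ * U₂ = 1)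
    (d : Fin n → ℝ → ℝ)
    (hd : ∀ (i : Fin n) (z : ℝ), HasDerivAt (d i) (deriv (d i) z) z)
    (hd' : ∀ (i : Fin n) (z : ℝ), HasDerivAt (deriv (d i)) (d i z ^ 3 - d i z) z)
    (B : ℝ → Matrix (Fin n) (Fin n) ℝ)
    (hB : ∀ z : ℝ, B z = U₁ * Matrix.diagonal (fun i => d i z) * U₂ᵀ) :
    (∀ z : ℝ, HasDerivAt B (deriv B z) z) ∧
      ∀ z : ℝ, HasDerivAt (deriv B) (B z * ((B z)ᵀ * B z - 1)) z :=
  stmt12_general n U₁ U₂ hU₁ hU₂ d hd hd' B hB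
end

section
/- Let ξ₁, ξ₂ : ℝ → ℝ be twice differentiable and define Ã₀ : ℝ × ℝ → M(2,ℝ) by Ã₀(s,z) = R(ξ₁(s))·diag(1, tanh(z/√2))·R(ξ₂(s))ᵀ, where R(θ) is the 2 × 2 rotation matrix. Then for every s ∈ ℝ, the function z ↦ ⟨∂_s²Ã₀(s,z), ∂_zÃ₀(s,z)⟩_F is integrable over ℝ and ∫_ℝ ⟨∂_s²Ã₀(s,z), ∂_zÃ₀(s,z)⟩_F dz = 4·ξ₁'(s)·ξ₂'(s). In particular, if ξ₁ = (η₋ + η₊)/2 and ξ₂ = (η₋ − η₊)/2 for differentiable functions η₋, η₊ : ℝ → ℝ, this integral equals (η₋'(s))² − (η₊'(s))², the jump in the squared tangential derivative of the phase across the interface. -/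
open Matrix MeasureTheory

attribute [local instance] Matrix.frobeniusNormedAddCommGroup Matrix.frobeniusNormedSpace

/-!
Since `diag(1, τ) = (1 + τ)/2 · diag(1, 1) + (1 - τ)/2 · diag(1, -1)` and
`diag(1, -1) R(θ)ᵀ = R(θ) diag(1, -1)`, the profile splits into two rigid modes,
`Ã₀ = (1 + t)/2 · R(ξ₁ - ξ₂) + (1 - t)/2 · R(ξ₁ + ξ₂) diag(1, -1)` with `t = tanh(z/√2)`;
for `ξ₁ = (η₋ + η₊)/2`, `ξ₂ = (η₋ - η₊)/2` these are the phases `η₊` and `η₋` on the two sides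
of the interface. Differentiating `R(θ)` turns it by `π/2`, and
`⟨R(a) diag(1, σ), R(b) diag(1, τ)⟩_F = (1 + στ) cos(b - a)`: the two modes are orthogonal and the
`π/2`-turned terms drop out, leaving the integrand `2 ξ₁' ξ₂' t' - (ξ₁'² + ξ₂'²) t t'`.
Finally `∫ t' = 2` and `∫ t t' = 0` because `t` increases from `-1` to `1`.
-/

open Real Filter Topology Set

theorem integrable_of_hasDerivAt_of_nonneg_of_tendsto {f f' : ℝ → ℝ} {a b : ℝ}
    (hf : ∀ x, HasDerivAt f (f' x) x) (hf' : ∀ x, 0 ≤ f' x)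
    (ha : Tendsto f atBot (𝓝 a)) (hb : Tendsto f atTop (𝓝 b)) : Integrable f' := by
  have hIoi : IntegrableOn f' (Ioi 0) :=
    integrableOn_Ioi_deriv_of_nonneg' (fun x _ => hf x) (fun x _ => hf' x) hb
  -- the left half-line, through the reflected profile `x ↦ -f (-x)`
  have hIoi_neg : IntegrableOn (fun x => f' (-x)) (Ioi 0) :=
    integrableOn_Ioi_deriv_of_nonneg' (g := fun x => -f (-x))
      (fun x _ => (((hf (-x)).comp x (hasDerivAt_neg x)).neg).congr_deriv (by ring))
      (fun x _ => hf' (-x)) (ha.comp tendsto_neg_atTop_atBot).neg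
  have hIio : IntegrableOn f' (Iio 0) := by
    simpa using
      (show IntegrableOn (fun x => f' (-x)) (Ioi (-0)) by simpa using hIoi_neg).comp_neg_Iio
  rw [← integrableOn_univ, ← Iio_union_Ici (a := 0)]
  exact hIio.union ((integrableOn_Ici_iff_integrableOn_Ioi).mpr hIoi)

theorem integrable_mul_of_hasDerivAt_of_nonneg_of_tendsto {f f' : ℝ → ℝ} {a b : ℝ}
    (hf : ∀ x, HasDerivAt f (f' x) x) (hf' : ∀ x, 0 ≤ f' x)
    (ha : Tendsto f atBot (𝓝 a)) (hb : Tendsto f atTop (𝓝 b)) :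
    Integrable (fun x => f x * f' x) := by
  have hmono : Monotone f := monotone_of_hasDerivAt_nonneg hf hf'
  refine (integrable_of_hasDerivAt_of_nonneg_of_tendsto hf hf' ha hb).bdd_mul (c := max |a| |b|)
    (continuous_iff_continuousAt.mpr fun x => (hf x).continuousAt).aestronglyMeasurable
    (.of_forall fun x => ?_)
  exact abs_le_max_abs_abs (hmono.le_of_tendsto ha x) (hmono.ge_of_tendsto hb x)

theorem integral_mul_of_hasDerivAt_of_nonneg_of_tendsto {f f' : ℝ → ℝ} {a b : ℝ}
    (hf : ∀ x, HasDerivAt f (f' x) x) (hf' : ∀ x, 0 ≤ f' x)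
    (ha : Tendsto f atBot (𝓝 a)) (hb : Tendsto f atTop (𝓝 b)) :
    ∫ x, f x * f' x = (b ^ 2 - a ^ 2) / 2 := by
  have hsq : ∀ x, HasDerivAt (fun x => f x ^ 2 / 2) (f x * f' x) x := fun x =>
    (((hf x).pow 2).div_const 2).congr_deriv (by ring)
  rw [integral_of_hasDerivAt_of_tendsto hsq
    (integrable_mul_of_hasDerivAt_of_nonneg_of_tendsto hf hf' ha hb)
    ((ha.pow 2).div_const 2) ((hb.pow 2).div_const 2)]
  ring

namespace Real

theorem hasDerivAt_tanh (x : ℝ) : HasDerivAt tanh (1 - tanh x ^ 2) x := by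
  have h := (hasDerivAt_sinh x).div (hasDerivAt_cosh x) (cosh_pos x).ne'
  rw [← show tanh = sinh / cosh from funext fun y => tanh_eq_sinh_div_cosh y] at h
  refine h.congr_deriv ?_
  rw [tanh_eq_sinh_div_cosh]
  field_simp

theorem tanh_eq_one_sub (x : ℝ) : tanh x = 1 - 2 / (exp (2 * x) + 1) := by
  have h : exp (2 * x) = exp x * exp x := by rw [← exp_add, two_mul]
  rw [tanh_eq, exp_neg, h]
  field_simp
  ring

theorem tendsto_tanh_atTop : Tendsto tanh atTop (𝓝 1) := by
  have h : Tendsto (fun x => 2 / (exp (2 * x) + 1)) atTop (𝓝 0) :=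
    ((tendsto_exp_atTop.comp (tendsto_id.const_mul_atTop two_pos)).atTop_add
      tendsto_const_nhds).const_div_atTop 2
  simpa [← tanh_eq_one_sub] using h.const_sub 1

theorem tendsto_tanh_atBot : Tendsto tanh atBot (𝓝 (-1)) := by
  simpa [Function.comp_def] using (tendsto_tanh_atTop.comp tendsto_neg_atBot_atTop).neg

end Real

theorem rot_eq_smul_one_add_smul (θ : ℝ) :
    rot θ = cos θ • (1 : Matrix (Fin 2) (Fin 2) ℝ) + sin θ • rot (π / 2) := by
  ext i j; fin_cases i <;> fin_cases j <;> simp [rot]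

theorem rot_add_pi (θ : ℝ) : rot (θ + π) = -rot θ := by
  ext i j; fin_cases i <;> fin_cases j <;> simp [rot]

theorem trace_transpose_rot_mul_diagonal_mul (a b σ τ : ℝ) :
    trace ((rot a * diagonal ![1, σ])ᵀ * (rot b * diagonal ![1, τ])) =
      (1 + σ * τ) * cos (b - a) := by
  simp only [rot, diagonal_vec2, trace_fin_two, mul_apply, transpose_apply, Fin.sum_univ_two,
    of_apply, cons_val', cons_val_zero, cons_val_one, cons_val_fin_one, Fin.isValue]
  rw [cos_sub]
  ring

theorem rot_mul_diagonal_mul_rot_transpose (a b τ : ℝ) :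
    rot a * diagonal ![1, τ] * (rot b)ᵀ =
      ((1 + τ) / 2) • (rot (a - b) * diagonal ![1, 1]) +
        ((1 - τ) / 2) • (rot (a + b) * diagonal ![1, -1]) := by
  ext i j
  fin_cases i <;> fin_cases j <;>
    simp only [rot, diagonal_vec2, Matrix.add_apply, Matrix.smul_apply, mul_apply,
      transpose_apply, Fin.sum_univ_two, of_apply, cons_val', cons_val_zero, cons_val_one,
      cons_val_fin_one, Fin.isValue, Fin.zero_eta, Fin.mk_one, smul_eq_mul, cos_sub, sin_sub,
      cos_add, sin_add] <;>
    ring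

section

variable {n : Type*} [Fintype n]

theorem hasDerivAt_rot_mul (M : Matrix (Fin 2) n ℝ) (θ : ℝ) :
    HasDerivAt (fun θ => rot θ * M) (rot (θ + π / 2) * M) θ := by
  have h (θ : ℝ) : rot θ * M = cos θ • M + sin θ • (rot (π / 2) * M) := by
    rw [rot_eq_smul_one_add_smul, Matrix.add_mul, Matrix.smul_mul, Matrix.one_mul,
      Matrix.smul_mul]
  rw [h, cos_add_pi_div_two, sin_add_pi_div_two]
  exact (((hasDerivAt_cos θ).smul_const M).add
    ((hasDerivAt_sin θ).smul_const _)).congr_of_eventuallyEq (.of_forall h)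

theorem HasDerivAt.rot_mul {θ : ℝ → ℝ} {θ' s : ℝ} (M : Matrix (Fin 2) n ℝ)
    (h : HasDerivAt θ θ' s) :
    HasDerivAt (fun s => rot (θ s) * M) (θ' • (rot (θ s + π / 2) * M)) s :=
  (hasDerivAt_rot_mul M (θ s)).scomp s h

theorem HasDerivAt.smul_rot_add_pi_div_two_mul {θ θ' : ℝ → ℝ} {θ'' s : ℝ}
    (M : Matrix (Fin 2) n ℝ) (hθ : HasDerivAt θ (θ' s) s) (hθ' : HasDerivAt θ' θ'' s) :
    HasDerivAt (fun s => θ' s • (rot (θ s + π / 2) * M))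
      (θ'' • (rot (θ s + π / 2) * M) - θ' s ^ 2 • (rot (θ s) * M)) s := by
  refine (hθ'.smul ((hθ.add_const (π / 2)).rot_mul M)).congr_deriv ?_
  rw [add_assoc, add_halves, rot_add_pi, smul_smul, Matrix.neg_mul, smul_neg, sq]
  exact neg_add_eq_sub _ _

theorem deriv_deriv_smul_rot_mul_add_smul_rot_mul {θ₁ θ₂ θ₁' θ₂' θ₁'' θ₂'' : ℝ → ℝ}
    (hθ₁ : ∀ s, HasDerivAt θ₁ (θ₁' s) s) (hθ₁' : ∀ s, HasDerivAt θ₁' (θ₁'' s) s)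
    (hθ₂ : ∀ s, HasDerivAt θ₂ (θ₂' s) s) (hθ₂' : ∀ s, HasDerivAt θ₂' (θ₂'' s) s)
    (c₁ c₂ : ℝ) (M₁ M₂ : Matrix (Fin 2) n ℝ) (s : ℝ) :
    deriv (fun s' => deriv (fun s => c₁ • (rot (θ₁ s) * M₁) + c₂ • (rot (θ₂ s) * M₂)) s') s =
      c₁ • (θ₁'' s • (rot (θ₁ s + π / 2) * M₁) - θ₁' s ^ 2 • (rot (θ₁ s) * M₁)) +
        c₂ • (θ₂'' s • (rot (θ₂ s + π / 2) * M₂) - θ₂' s ^ 2 • (rot (θ₂ s) * M₂)) := by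
  have h (s' : ℝ) : deriv (fun s => c₁ • (rot (θ₁ s) * M₁) + c₂ • (rot (θ₂ s) * M₂)) s' =
      c₁ • (θ₁' s' • (rot (θ₁ s' + π / 2) * M₁)) + c₂ • (θ₂' s' • (rot (θ₂ s' + π / 2) * M₂)) :=
    ((((hθ₁ s').rot_mul M₁).const_smul c₁).add (((hθ₂ s').rot_mul M₂).const_smul c₂)).deriv
  rw [funext h]
  exact ((((hθ₁ s).smul_rot_add_pi_div_two_mul M₁ (hθ₁' s)).const_smul c₁).add
    (((hθ₂ s).smul_rot_add_pi_div_two_mul M₂ (hθ₂' s)).const_smul c₂)).deriv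

end

theorem trace_deriv_deriv_transpose_mul_deriv {ξ₁ ξ₂ ξ₁' ξ₂' ξ₁'' ξ₂'' t t' : ℝ → ℝ}
    (hξ₁ : ∀ s, HasDerivAt ξ₁ (ξ₁' s) s) (hξ₁' : ∀ s, HasDerivAt ξ₁' (ξ₁'' s) s)
    (hξ₂ : ∀ s, HasDerivAt ξ₂ (ξ₂' s) s) (hξ₂' : ∀ s, HasDerivAt ξ₂' (ξ₂'' s) s)
    (ht : ∀ z, HasDerivAt t (t' z) z) (A : ℝ → ℝ → Matrix (Fin 2) (Fin 2) ℝ)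
    (hA : ∀ s z, A s z = rot (ξ₁ s) * diagonal ![1, t z] * (rot (ξ₂ s))ᵀ) (s z : ℝ) :
    trace ((deriv (fun s' => deriv (fun s'' => A s'' z) s') s)ᵀ * deriv (fun z' => A s z') z) =
      t' z * (2 * ξ₁' s * ξ₂' s) - t z * t' z * (ξ₁' s ^ 2 + ξ₂' s ^ 2) := by
  have hα : ∀ s, HasDerivAt (fun s => ξ₁ s - ξ₂ s) (ξ₁' s - ξ₂' s) s :=
    fun s => (hξ₁ s).sub (hξ₂ s)
  have hα' : ∀ s, HasDerivAt (fun s => ξ₁' s - ξ₂' s) (ξ₁'' s - ξ₂'' s) s :=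
    fun s => (hξ₁' s).sub (hξ₂' s)
  have hβ : ∀ s, HasDerivAt (fun s => ξ₁ s + ξ₂ s) (ξ₁' s + ξ₂' s) s :=
    fun s => (hξ₁ s).add (hξ₂ s)
  have hβ' : ∀ s, HasDerivAt (fun s => ξ₁' s + ξ₂' s) (ξ₁'' s + ξ₂'' s) s :=
    fun s => (hξ₁' s).add (hξ₂' s)
  simp_rw [hA, rot_mul_diagonal_mul_rot_transpose]
  have hDz : deriv (fun z =>
      ((1 + t z) / 2) • (rot (ξ₁ s - ξ₂ s) * diagonal ![1, 1]) +
        ((1 - t z) / 2) • (rot (ξ₁ s + ξ₂ s) * diagonal ![1, -1])) z =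
      (t' z / 2) • (rot (ξ₁ s - ξ₂ s) * diagonal ![1, 1]) +
        (-t' z / 2) • (rot (ξ₁ s + ξ₂ s) * diagonal ![1, -1]) :=
    ((((ht z).const_add 1).div_const 2).smul_const _ |>.add
      ((((ht z).const_sub 1).div_const 2).smul_const _)).deriv
  rw [deriv_deriv_smul_rot_mul_add_smul_rot_mul hα hα' hβ hβ', hDz]
  simp only [transpose_add, transpose_sub, transpose_smul, Matrix.add_mul, Matrix.mul_add,
    Matrix.sub_mul, Matrix.smul_mul, Matrix.mul_smul, trace_add, trace_sub, trace_smul,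
    trace_transpose_rot_mul_diagonal_mul, smul_eq_mul, sub_add_cancel_left, sub_self, cos_neg,
    cos_pi_div_two, cos_zero]
  ring

theorem integrable_and_integral_trace_deriv_deriv_transpose_mul_deriv
    {ξ₁ ξ₂ ξ₁' ξ₂' ξ₁'' ξ₂'' t t' : ℝ → ℝ} {a b : ℝ}
    (hξ₁ : ∀ s, HasDerivAt ξ₁ (ξ₁' s) s) (hξ₁' : ∀ s, HasDerivAt ξ₁' (ξ₁'' s) s)
    (hξ₂ : ∀ s, HasDerivAt ξ₂ (ξ₂' s) s) (hξ₂' : ∀ s, HasDerivAt ξ₂' (ξ₂'' s) s)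
    (ht : ∀ z, HasDerivAt t (t' z) z) (ht' : ∀ z, 0 ≤ t' z)
    (hbot : Tendsto t atBot (𝓝 a)) (htop : Tendsto t atTop (𝓝 b))
    (A : ℝ → ℝ → Matrix (Fin 2) (Fin 2) ℝ)
    (hA : ∀ s z, A s z = rot (ξ₁ s) * diagonal ![1, t z] * (rot (ξ₂ s))ᵀ) (s : ℝ) :
    Integrable (fun z =>
        trace ((deriv (fun s' => deriv (fun s'' => A s'' z) s') s)ᵀ *
          deriv (fun z' => A s z') z)) ∧
      ∫ z, trace ((deriv (fun s' => deriv (fun s'' => A s'' z) s') s)ᵀ *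
          deriv (fun z' => A s z') z) =
        (b - a) * (2 * ξ₁' s * ξ₂' s) - (b ^ 2 - a ^ 2) / 2 * (ξ₁' s ^ 2 + ξ₂' s ^ 2) := by
  simp_rw [trace_deriv_deriv_transpose_mul_deriv hξ₁ hξ₁' hξ₂ hξ₂' ht A hA s]
  have hint := integrable_of_hasDerivAt_of_nonneg_of_tendsto ht ht' hbot htop
  have hint' := integrable_mul_of_hasDerivAt_of_nonneg_of_tendsto ht ht' hbot htop
  refine ⟨(hint.mul_const _).sub (hint'.mul_const _), ?_⟩
  rw [integral_sub (hint.mul_const _) (hint'.mul_const _), integral_mul_const, integral_mul_const,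
    integral_of_hasDerivAt_of_tendsto ht hint hbot htop,
    integral_mul_of_hasDerivAt_of_nonneg_of_tendsto ht ht' hbot htop]

/-- The computational core of Proposition 3.3: for the transition profile
`Ã₀(s,z) = R(ξ₁(s)) diag(1, tanh(z/√2)) R(ξ₂(s))ᵀ`,
`∫_ℝ ⟨∂_s² Ã₀, ∂_z Ã₀⟩_F dz = 4 ξ₁'(s) ξ₂'(s)`; in particular, for
`ξ₁ = (η₋+η₊)/2` and `ξ₂ = (η₋−η₊)/2` it equals `(η₋')² − (η₊')²`, the jump in the
squared tangential derivative of the phase across the interface. -/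
theorem stmt13 (ξ₁ ξ₂ : ℝ → ℝ)
    (hξ₁ : ∀ s : ℝ, HasDerivAt ξ₁ (deriv ξ₁ s) s)
    (hξ₁' : ∀ s : ℝ, HasDerivAt (deriv ξ₁) (deriv (deriv ξ₁) s) s)
    (hξ₂ : ∀ s : ℝ, HasDerivAt ξ₂ (deriv ξ₂ s) s)
    (hξ₂' : ∀ s : ℝ, HasDerivAt (deriv ξ₂) (deriv (deriv ξ₂) s) s)
    (A : ℝ → ℝ → Matrix (Fin 2) (Fin 2) ℝ)
    (hA : ∀ s z : ℝ,
      A s z = rot (ξ₁ s) * Matrix.diagonal ![1, Real.tanh (z / Real.sqrt 2)] * (rot (ξ₂ s))ᵀ) :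
    (∀ s : ℝ,
        Integrable (fun z : ℝ =>
          Matrix.trace ((deriv (fun s' => deriv (fun s'' => A s'' z) s') s)ᵀ *
            deriv (fun z' => A s z') z)) ∧
        (∫ z : ℝ,
            Matrix.trace ((deriv (fun s' => deriv (fun s'' => A s'' z) s') s)ᵀ *
              deriv (fun z' => A s z') z)) = 4 * deriv ξ₁ s * deriv ξ₂ s) ∧
      ∀ ηm ηp : ℝ → ℝ, (∀ s : ℝ, HasDerivAt ηm (deriv ηm s) s) →
        (∀ s : ℝ, HasDerivAt ηp (deriv ηp s) s) →
        (ξ₁ = fun s => (ηm s + ηp s) / 2) → (ξ₂ = fun s => (ηm s - ηp s) / 2) →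
        ∀ s : ℝ,
          (∫ z : ℝ,
              Matrix.trace ((deriv (fun s' => deriv (fun s'' => A s'' z) s') s)ᵀ *
                deriv (fun z' => A s z') z)) = deriv ηm s ^ 2 - deriv ηp s ^ 2 := by
  have ht (z : ℝ) : HasDerivAt (fun z => tanh (z / √2)) ((1 - tanh (z / √2) ^ 2) / √2) z :=
    ((hasDerivAt_tanh _).comp z ((hasDerivAt_id z).div_const _)).congr_deriv
      (by rw [id, mul_one_div])
  have ht' (z : ℝ) : 0 ≤ (1 - tanh (z / √2) ^ 2) / √2 :=
    div_nonneg (sub_nonneg.mpr (tanh_sq_lt_one _).le) (sqrt_nonneg 2)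
  have hbot := tendsto_tanh_atBot.comp (tendsto_id.atBot_div_const (sqrt_pos.mpr two_pos))
  have htop := tendsto_tanh_atTop.comp (tendsto_id.atTop_div_const (sqrt_pos.mpr two_pos))
  have key := integrable_and_integral_trace_deriv_deriv_transpose_mul_deriv
    hξ₁ hξ₁' hξ₂ hξ₂' ht ht' hbot htop A hA
  refine ⟨fun s => ⟨(key s).1, by rw [(key s).2]; ring⟩,
    fun ηm ηp hηm hηp hξ₁η hξ₂η s => ?_⟩
  have h₁ : deriv ξ₁ s = (deriv ηm s + deriv ηp s) / 2 := by
    rw [hξ₁η]; exact (((hηm s).add (hηp s)).div_const 2).deriv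
  have h₂ : deriv ξ₂ s = (deriv ηm s - deriv ηp s) / 2 := by
    rw [hξ₂η]; exact (((hηm s).sub (hηp s)).div_const 2).deriv
  rw [(key s).2, h₁, h₂]
  ring
end
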